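/- Let p ∈ [1,∞] with conjugate exponent p'. For every nonzero signal f : V → X, the uncertainty inequality ‖f‖_p · ‖f̂‖_p / (‖f‖_∞ · ‖f̂‖_∞) ≥ 1 / (κ_{p'}(U) · κ_{p'}(U*)) holds. In particular, ‖f‖_1‖f̂‖_1 / (‖f‖_∞‖f̂‖_∞) ≥ 1/κ_∞(U)² and ‖f‖_2‖f̂‖_2 / (‖f‖_∞‖f̂‖_∞) ≥ 1. -/

import Mathlib

open Finset
open scoped ENNReal

/-- The `L^p` norm of a signal `f : Fin N → E` (sup-norm when `p = ∞`). -/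
noncomputable def gsNorm {E : Type*} [NormedAddCommGroup E] {N : ℕ} (p : ℝ≥0∞)
    (f : Fin N → E) : ℝ :=
  if p = ∞ then ⨆ n, ‖f n‖ else (∑ n, ‖f n‖ ^ p.toReal) ^ (1 / p.toReal)

/-- `u k` is the `k`-th column of a unitary matrix, i.e. the family of columns is
orthonormal for the standard inner product on `𝕂^N` (hence an orthonormal basis). -/
def OrthoBasis {𝕂 : Type*} [RCLike 𝕂] {N : ℕ} (u : Fin N → Fin N → 𝕂) : Prop :=
  ∀ k l : Fin N, ∑ n, (starRingEnd 𝕂) (u k n) * u l n = if k = l then (1 : 𝕂) else 0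

/-- Graph Fourier transform: `f̂ k = ∑ n, conj (u k n) • f n`. -/
noncomputable def gft {𝕂 : Type*} [RCLike 𝕂] {X : Type*} [NormedAddCommGroup X]
    [NormedSpace 𝕂 X] {N : ℕ} (u : Fin N → Fin N → 𝕂) (f : Fin N → X) : Fin N → X :=
  fun k => ∑ n, (starRingEnd 𝕂) (u k n) • f n

/-- `p`-coherence `κ_p(U)`: the maximum of the `ℓ^p` norms of the columns of `U`. -/
noncomputable def coh {𝕂 : Type*} [RCLike 𝕂] {N : ℕ} (p : ℝ≥0∞)
    (u : Fin N → Fin N → 𝕂) : ℝ :=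
  ⨆ k, gsNorm p (u k)

/-- Mixed norm `‖U‖_{p,q}`: the `ℓ^q` norm of the vector of `ℓ^p` norms of the columns. -/
noncomputable def mixNorm {𝕂 : Type*} [RCLike 𝕂] {N : ℕ} (p q : ℝ≥0∞)
    (u : Fin N → Fin N → 𝕂) : ℝ :=
  gsNorm q (fun k => gsNorm p (u k))

/-- Graph convolution of a scalar signal `α` with a signal `f`:
`(α*f)(n) = ∑ k, u k n • (α̂ k • f̂ k)`. -/
noncomputable def gconv {𝕂 : Type*} [RCLike 𝕂] {X : Type*} [NormedAddCommGroup X]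
    [NormedSpace 𝕂 X] {N : ℕ} (u : Fin N → Fin N → 𝕂) (α : Fin N → 𝕂)
    (f : Fin N → X) : Fin N → X :=
  fun n => ∑ k, u k n • (gft u α k • gft u f k)

/-- Graph translation operator `T_m f (n) = ∑ k, (u k n * conj (u k m)) • f̂ k`. -/
noncomputable def gtrans {𝕂 : Type*} [RCLike 𝕂] {X : Type*} [NormedAddCommGroup X]
    [NormedSpace 𝕂 X] {N : ℕ} (u : Fin N → Fin N → 𝕂) (m : Fin N)
    (f : Fin N → X) : Fin N → X :=
  fun n => ∑ k, (u k n * (starRingEnd 𝕂) (u k m)) • gft u f k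

/-!
Each Fourier coefficient `f̂ k` is a pairing of `f` with the column `u k`, so Hölder's inequality
gives `‖f̂‖_∞ ≤ κ_{p'}(U) ‖f‖_p`. Dually, by Fourier inversion `f n` is a pairing of `f̂` with the
row `u(n)`, so `‖f‖_∞ ≤ κ_{p'}(U*) ‖f̂‖_p`. Multiplying the two bounds gives the inequality. For
`p = 1` both coherences `κ_∞` are the largest modulus of an entry of `U`, and for `p = 2` both
coherences `κ_2` equal `1` since the columns and the rows of a unitary matrix are unit vectors.
-/

theorem one_div_le_div_of_le_mul {α : Type*} [Field α] [LinearOrder α] [IsStrictOrderedRing α]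
    {a b c : α} (ha : 0 ≤ a) (hb : 0 < b) (h : b ≤ c * a) : 1 / c ≤ a / b := by
  rcases le_or_gt c 0 with hc | hc
  · exact (one_div_nonpos.mpr hc).trans (div_nonneg ha hb.le)
  · rwa [div_le_div_iff₀ hc hb, one_mul, mul_comm]

section gsNorm

variable {N : ℕ} {E F : Type*} [NormedAddCommGroup E] [NormedAddCommGroup F]

theorem gsNorm_nonneg (p : ℝ≥0∞) (f : Fin N → E) : 0 ≤ gsNorm p f := by
  unfold gsNorm
  split
  · exact Real.iSup_nonneg fun n => norm_nonneg _
  · positivity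

theorem gsNorm_top (f : Fin N → E) : gsNorm ∞ f = ⨆ n, ‖f n‖ := if_pos rfl

theorem gsNorm_of_ne_top {p : ℝ≥0∞} (hp : p ≠ ∞) (f : Fin N → E) :
    gsNorm p f = (∑ n, ‖f n‖ ^ p.toReal) ^ (1 / p.toReal) := if_neg hp

theorem gsNorm_one (f : Fin N → E) : gsNorm 1 f = ∑ n, ‖f n‖ := by
  simp [gsNorm_of_ne_top ENNReal.one_ne_top]

theorem gsNorm_two_eq_one_of_sum_sq {f : Fin N → E} (h : ∑ n, ‖f n‖ ^ 2 = 1) :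
    gsNorm 2 f = 1 := by
  simp [gsNorm_of_ne_top ENNReal.ofNat_ne_top, h]

theorem gsNorm_congr_norm (p : ℝ≥0∞) {f : Fin N → E} {g : Fin N → F}
    (h : ∀ n, ‖f n‖ = ‖g n‖) : gsNorm p f = gsNorm p g := by
  simp only [gsNorm, h]

theorem norm_le_gsNorm_top (f : Fin N → E) (n : Fin N) : ‖f n‖ ≤ gsNorm ∞ f := by
  rw [gsNorm_top]
  exact le_ciSup (f := fun m => ‖f m‖) (Set.finite_range _).bddAbove n

theorem gsNorm_top_pos {f : Fin N → E} (hf : f ≠ 0) : 0 < gsNorm ∞ f := by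
  obtain ⟨n, hn⟩ := Function.ne_iff.mp hf
  exact (norm_pos_iff.mpr hn).trans_le (norm_le_gsNorm_top f n)

theorem sum_norm_mul_norm_le_gsNorm_top_mul_gsNorm_one (f : Fin N → E) (g : Fin N → F) :
    ∑ n, ‖f n‖ * ‖g n‖ ≤ gsNorm ∞ f * gsNorm 1 g := by
  rw [gsNorm_one, mul_sum]
  exact sum_le_sum fun n _ =>
    mul_le_mul_of_nonneg_right (norm_le_gsNorm_top f n) (norm_nonneg _)

theorem sum_norm_mul_norm_le_gsNorm_mul_gsNorm {p q : ℝ≥0∞} [p.HolderConjugate q]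
    (f : Fin N → E) (g : Fin N → F) :
    ∑ n, ‖f n‖ * ‖g n‖ ≤ gsNorm p f * gsNorm q g := by
  by_cases hp : p = ∞
  · obtain rfl : q = 1 := (ENNReal.HolderConjugate.eq_top_iff_eq_one p q).mp hp
    subst hp
    exact sum_norm_mul_norm_le_gsNorm_top_mul_gsNorm_one f g
  by_cases hq : q = ∞
  · obtain rfl : p = 1 := (ENNReal.HolderConjugate.eq_top_iff_eq_one q p).mp hq
    subst hq
    simpa only [mul_comm] using sum_norm_mul_norm_le_gsNorm_top_mul_gsNorm_one g f
  rw [gsNorm_of_ne_top hp, gsNorm_of_ne_top hq]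
  exact Real.inner_le_Lp_mul_Lq_of_nonneg univ (ENNReal.HolderConjugate.toReal_of_ne_top hp hq)
    (fun _ _ => norm_nonneg _) (fun _ _ => norm_nonneg _)

theorem norm_sum_smul_le_gsNorm_mul_gsNorm {𝕜 : Type*} [NormedField 𝕜] [NormedSpace 𝕜 E]
    {p q : ℝ≥0∞} [p.HolderConjugate q] (c : Fin N → 𝕜) (f : Fin N → E) :
    ‖∑ n, c n • f n‖ ≤ gsNorm q c * gsNorm p f :=
  calc ‖∑ n, c n • f n‖ ≤ ∑ n, ‖c n‖ * ‖f n‖ := norm_sum_le_of_le _ fun _ _ => norm_smul_le _ _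
    _ ≤ gsNorm q c * gsNorm p f := sum_norm_mul_norm_le_gsNorm_mul_gsNorm c f

end gsNorm

section coh

variable {𝕂 : Type*} [RCLike 𝕂] {N : ℕ}

theorem gsNorm_le_coh (p : ℝ≥0∞) (v : Fin N → Fin N → 𝕂) (k : Fin N) :
    gsNorm p (v k) ≤ coh p v :=
  le_ciSup (f := fun l => gsNorm p (v l)) (Set.finite_range _).bddAbove k

theorem coh_nonneg (p : ℝ≥0∞) (v : Fin N → Fin N → 𝕂) : 0 ≤ coh p v :=
  Real.iSup_nonneg fun k => gsNorm_nonneg p (v k)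

theorem coh_conj (p : ℝ≥0∞) (v : Fin N → Fin N → 𝕂) :
    coh p (fun k n => (starRingEnd 𝕂) (v k n)) = coh p v := by
  unfold coh
  congr! 2 with k
  exact gsNorm_congr_norm p fun n => RCLike.norm_conj (v k n)

theorem coh_top_transpose (v : Fin N → Fin N → 𝕂) :
    coh ∞ (fun n k => v k n) = coh ∞ v := by
  have swap_le : ∀ w : Fin N → Fin N → 𝕂, coh ∞ (fun n k => w k n) ≤ coh ∞ w := fun w => by
    refine Real.iSup_le (fun n => ?_) (coh_nonneg ∞ w)
    rw [gsNorm_top]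
    exact Real.iSup_le (fun k => (norm_le_gsNorm_top (w k) n).trans (gsNorm_le_coh ∞ w k))
      (coh_nonneg ∞ w)
  exact (swap_le v).antisymm (swap_le fun n k => v k n)

theorem gsNorm_top_sum_smul_le {X : Type*} [NormedAddCommGroup X] [NormedSpace 𝕂 X]
    {p q : ℝ≥0∞} [p.HolderConjugate q] (v : Fin N → Fin N → 𝕂) (f : Fin N → X) :
    gsNorm ∞ (fun k => ∑ n, v k n • f n) ≤ coh q v * gsNorm p f := by
  rw [gsNorm_top]
  refine Real.iSup_le (fun k => ?_) (mul_nonneg (coh_nonneg q v) (gsNorm_nonneg p f))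
  exact (norm_sum_smul_le_gsNorm_mul_gsNorm (v k) f).trans
    (mul_le_mul_of_nonneg_right (gsNorm_le_coh q v k) (gsNorm_nonneg p f))

end coh

section OrthoBasis

variable {𝕂 : Type*} [RCLike 𝕂] {N : ℕ} {u : Fin N → Fin N → 𝕂}

theorem orthoBasis_iff_mem_unitaryGroup :
    OrthoBasis u ↔ Matrix.of u ∈ Matrix.unitaryGroup (Fin N) 𝕂 := by
  rw [Matrix.mem_unitaryGroup_iff, ← Matrix.ext_iff, forall_comm]
  simp [OrthoBasis, Matrix.mul_apply, Matrix.one_apply, mul_comm, eq_comm]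

theorem OrthoBasis.transpose (hU : OrthoBasis u) : OrthoBasis (fun n k => u k n) :=
  orthoBasis_iff_mem_unitaryGroup.mpr
    (Matrix.transpose_mem_unitaryGroup_iff.mpr (orthoBasis_iff_mem_unitaryGroup.mp hU))

theorem OrthoBasis.sum_norm_sq (hU : OrthoBasis u) (k : Fin N) : ∑ n, ‖u k n‖ ^ 2 = 1 := by
  have h := hU k k
  simp only [RCLike.conj_mul, if_pos] at h
  exact_mod_cast h

theorem OrthoBasis.coh_two [Nonempty (Fin N)] (hU : OrthoBasis u) : coh 2 u = 1 := by
  simp only [coh, gsNorm_two_eq_one_of_sum_sq (hU.sum_norm_sq _), ciSup_const]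

end OrthoBasis

section gft

variable {𝕂 : Type*} [RCLike 𝕂] {X : Type*} [NormedAddCommGroup X] [NormedSpace 𝕂 X] {N : ℕ}
  {u : Fin N → Fin N → 𝕂}

theorem sum_smul_gft (hU : OrthoBasis u) (f : Fin N → X) (n : Fin N) :
    ∑ k, u k n • gft u f k = f n := by
  simp only [gft, smul_sum, smul_smul]
  rw [sum_comm]
  simp only [← sum_smul, mul_comm (u _ n), hU.transpose _ n, ite_smul, one_smul, zero_smul,
    sum_ite_eq', mem_univ, if_true]

theorem gft_ne_zero (hU : OrthoBasis u) {f : Fin N → X} (hf : f ≠ 0) : gft u f ≠ 0 :=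
  fun h => hf (funext fun n => by simpa [h] using (sum_smul_gft hU f n).symm)

theorem gsNorm_top_gft_le_coh_mul_gsNorm {p q : ℝ≥0∞} [p.HolderConjugate q] (f : Fin N → X) :
    gsNorm ∞ (gft u f) ≤ coh q u * gsNorm p f := by
  rw [← coh_conj]
  exact gsNorm_top_sum_smul_le _ f

theorem gsNorm_top_le_coh_mul_gsNorm_gft {p q : ℝ≥0∞} [p.HolderConjugate q] (hU : OrthoBasis u)
    (f : Fin N → X) : gsNorm ∞ f ≤ coh q (fun n k => u k n) * gsNorm p (gft u f) :=
  calc gsNorm ∞ f = gsNorm ∞ (fun n => ∑ k, u k n • gft u f k) := by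
        simp only [sum_smul_gft hU]
    _ ≤ _ := gsNorm_top_sum_smul_le (fun n k => u k n) (gft u f)

theorem gft_uncertainty {p q : ℝ≥0∞} [p.HolderConjugate q] (hU : OrthoBasis u)
    {f : Fin N → X} (hf : f ≠ 0) :
    1 / (coh q u * coh q (fun n k => u k n)) ≤
      gsNorm p f * gsNorm p (gft u f) / (gsNorm ∞ f * gsNorm ∞ (gft u f)) := by
  refine one_div_le_div_of_le_mul (mul_nonneg (gsNorm_nonneg p f) (gsNorm_nonneg p _))
    (mul_pos (gsNorm_top_pos hf) (gsNorm_top_pos (gft_ne_zero hU hf))) ?_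
  calc gsNorm ∞ f * gsNorm ∞ (gft u f)
      ≤ (coh q (fun n k => u k n) * gsNorm p (gft u f)) * (coh q u * gsNorm p f) :=
        mul_le_mul (gsNorm_top_le_coh_mul_gsNorm_gft hU f) (gsNorm_top_gft_le_coh_mul_gsNorm f)
          (gsNorm_nonneg ∞ _) (mul_nonneg (coh_nonneg q _) (gsNorm_nonneg p _))
    _ = coh q u * coh q (fun n k => u k n) * (gsNorm p f * gsNorm p (gft u f)) := by ring

end gft

theorem gft_uncertainty_one_general {𝕂 : Type*} [RCLike 𝕂] {X : Type*} [NormedAddCommGroup X]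
    [NormedSpace 𝕂 X] {N : ℕ}
    (u : Fin N → Fin N → 𝕂) (hU : OrthoBasis u)
    (p p' : ℝ≥0∞) (hpp' : 1 / p + 1 / p' = 1) :
    ∀ f : Fin N → X, f ≠ 0 →
      ((gsNorm p f * gsNorm p (gft u f)) / (gsNorm ∞ f * gsNorm ∞ (gft u f)) ≥
        1 / (coh p' u * coh p' (fun n k => u k n))) ∧
      ((gsNorm 1 f * gsNorm 1 (gft u f)) / (gsNorm ∞ f * gsNorm ∞ (gft u f)) ≥
        1 / (coh ∞ u) ^ 2) ∧
      ((gsNorm 2 f * gsNorm 2 (gft u f)) / (gsNorm ∞ f * gsNorm ∞ (gft u f)) ≥ 1) := by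
  intro f hf
  have : p.HolderConjugate p' :=
    ENNReal.holderConjugate_iff.mpr (by simpa only [one_div] using hpp')
  obtain ⟨n, -⟩ := Function.ne_iff.mp hf
  have : Nonempty (Fin N) := ⟨n⟩
  refine ⟨gft_uncertainty hU hf, ?_, ?_⟩
  · simpa [coh_top_transpose, sq] using gft_uncertainty (p := 1) (q := ∞) hU hf
  · simpa [hU.coh_two, hU.transpose.coh_two] using gft_uncertainty (p := 2) (q := 2) hU hf

/-- uncertainty principle
`‖f‖_p‖f̂‖_p / (‖f‖_∞‖f̂‖_∞) ≥ 1/(κ_{p'}(U)·κ_{p'}(U*))`, with the particular cases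
`p = 1` and `p = 2`. -/
theorem gft_uncertainty_one {𝕂 : Type*} [RCLike 𝕂] {X : Type*} [NormedAddCommGroup X]
    [NormedSpace 𝕂 X] [CompleteSpace X] {N : ℕ} (hN : 0 < N)
    (u : Fin N → Fin N → 𝕂) (hU : OrthoBasis u)
    (p p' : ℝ≥0∞) (hp : 1 ≤ p) (hpp' : 1 / p + 1 / p' = 1) :
    ∀ f : Fin N → X, f ≠ 0 →
      ((gsNorm p f * gsNorm p (gft u f)) / (gsNorm ∞ f * gsNorm ∞ (gft u f)) ≥
        1 / (coh p' u * coh p' (fun n k => u k n))) ∧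
      ((gsNorm 1 f * gsNorm 1 (gft u f)) / (gsNorm ∞ f * gsNorm ∞ (gft u f)) ≥
        1 / (coh ∞ u) ^ 2) ∧
      ((gsNorm 2 f * gsNorm 2 (gft u f)) / (gsNorm ∞ f * gsNorm ∞ (gft u f)) ≥ 1) :=
  gft_uncertainty_one_general u hU p p' hpp'
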